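/- For a complex number h_j, the entire function λ ↦ φ_j(π,λ) has only simple zeros if and only if h_j ∉ Z_h. -/

import Mathlib

open MeasureTheory Filter Set
open scoped Classical

noncomputable section

/-- Lebesgue measure on `(0, π)`. -/
def mu0 : Measure ℝ := volume.restrict (Set.Ioo (0:ℝ) Real.pi)

/-- A chosen complex square root. -/
def csqrt (l : ℂ) : ℂ := l ^ ((1:ℂ)/2)

/-- `φ(h; λ; x) = cos(√λ x) + h·sin(√λ x)/√λ`, an entire function of `λ`
(the case `λ = 0` is filled in with the limiting value `1 + h x`). -/
def phi (h l : ℂ) (x : ℝ) : ℂ :=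
  if l = 0 then 1 + h * (x:ℂ)
  else Complex.cos (csqrt l * (x:ℂ)) + h * Complex.sin (csqrt l * (x:ℂ)) / csqrt l

/-- `∂φ/∂x`. -/
def phiX (h l : ℂ) (x : ℝ) : ℂ := deriv (fun t : ℝ => phi h l t) x

/-- `∂φ/∂λ`. -/
def phiL (h : ℂ) (x : ℝ) (l : ℂ) : ℂ := deriv (fun u : ℂ => phi h u x) l

/-- The characteristic function `Δ(λ)`. -/
def charFn {m : ℕ} (h : Fin m → ℂ) (p : Fin m → ℝ → ℂ) (l : ℂ) : ℂ :=
  ∑ j : Fin m, (phiX (h j) l Real.pi + ∫ x in (0:ℝ)..Real.pi, p j x * phi (h j) l x) *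
    ∏ s ∈ Finset.univ.erase j, phi (h s) l Real.pi

/-- `f` has a zero of multiplicity exactly `d` at `w`. -/
def ZeroMult (f : ℂ → ℂ) (w : ℂ) (d : ℕ) : Prop :=
  ∃ g : ℂ → ℂ, AnalyticAt ℂ g w ∧ g w ≠ 0 ∧ ∀ᶠ u in nhds w, f u = (u - w) ^ d * g u

/-- `h ∈ ℂ^m_*`: `z 0` is `z₁ = (1/m)∑ hⱼ`, the `z k, k ≠ 0` are the roots of
`P(z) = d/dz ∏ (z - hⱼ)`, and the `2m-1` numbers `h₁,…,h_m,z₂,…,z_m` are pairwise distinct. -/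
def CmStar {m : ℕ} [NeZero m] (h z : Fin m → ℂ) : Prop :=
  z 0 = (∑ j, h j) / (m : ℂ) ∧
  (∀ k : Fin m, k ≠ 0 →
    (Polynomial.derivative (∏ j : Fin m, (Polynomial.X - Polynomial.C (h j)))).eval (z k) = 0) ∧
  Function.Injective h ∧
  Set.InjOn z {k : Fin m | k ≠ 0} ∧
  ∀ j k : Fin m, k ≠ 0 → h j ≠ z k

/-- The asymptotics (*) for a family `{λ_{nk}}`. -/
def SatAsymp {m : ℕ} [NeZero m] (z : Fin m → ℂ) (Λ : ℕ → Fin m → ℂ) : Prop :=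
  ∃ ρ κ : ℕ → Fin m → ℂ,
    Summable (fun q : ℕ × Fin m => ‖κ q.1 q.2‖ ^ 2) ∧
    (∀ n k, (ρ n k) ^ 2 = Λ n k) ∧
    ∀ n : ℕ, 1 ≤ n →
      (ρ n 0 = (n:ℂ) + z 0 / ((Real.pi : ℂ) * n) + κ n 0 / n) ∧
      ∀ k : Fin m, k ≠ 0 →
        ρ n k = (n:ℂ) + 1/2 + z k / ((Real.pi : ℂ) * ((n:ℂ) + 1/2)) + κ n k / (n:ℂ) ^ 2

/-- The set `Z_h`. -/
def Zh : Set ℂ :=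
  { w | ∃ r : ℂ, r ≠ 0 ∧ Complex.sin r = r ∧
        w = -r / (2 * (Real.pi : ℂ)) * (Complex.cos (r/2) / Complex.sin (r/2)) }

/-! Put `λ = w ^ 2`. For `w ≠ 0`, `φ(π, w²) = cos (π w) + h sin (π w) / w`, and differentiating
through a local branch of `√λ` shows that a zero is double iff moreover `sin (π w) cos (π w) = π w`.
With `r = 2 π w` this reads `sin r = r`, while the zero itself gives `h = -w cot (π w)`, which is
exactly membership in `Z_h`. At `λ = 0` the Taylor expansions of `cos` and `sin` give
`φ(π, 0) = 1 + h π` and `∂_λ φ(π, 0) = -π² / 2 - h π³ / 6`, which cannot vanish together. -/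

open scoped Real Topology

/-- For `σ = sin (p w)`, `c = cos (p w)`: at a zero of `c + h σ / w`, the derivative
`(-p σ w ^ 2 + h (p w c - σ)) / w ^ 2` vanishes iff `σ c = p w`. -/
theorem deriv_eq_zero_iff_of_sq_add_sq {R : Type*} [CommRing R] [IsDomain R] {h p w σ c : R}
    (hp : p ≠ 0) (hw : w ≠ 0) (hpyth : σ ^ 2 + c ^ 2 = 1) (hzero : w * c + h * σ = 0) :
    -p * σ * w ^ 2 + h * (p * w * c - σ) = 0 ↔ σ * c = p * w := by
  constructor
  · intro hderiv
    have hmul : w * (σ * c - p * w) = 0 := by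
      linear_combination σ * hderiv - (p * w * c - σ) * hzero + p * w ^ 2 * hpyth
    exact sub_eq_zero.1 ((mul_eq_zero.1 hmul).resolve_left hw)
  · intro hdouble
    have hσ : σ ≠ 0 := fun h0 => mul_ne_zero hp hw (by rw [← hdouble, h0, zero_mul])
    have hmul : σ * (-p * σ * w ^ 2 + h * (p * w * c - σ)) = 0 := by
      linear_combination (p * w * c - σ) * hzero - p * w ^ 2 * hpyth + w * hdouble
    exact (mul_eq_zero.1 hmul).resolve_left hσ

section

open Complex

theorem csqrt_sq (l : ℂ) : csqrt l ^ 2 = l := by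
  rw [csqrt, one_div]
  exact cpow_ofNat_inv_pow l 2

theorem csqrt_ne_zero {l : ℂ} (hl : l ≠ 0) : csqrt l ≠ 0 := fun h0 =>
  hl (by rw [← csqrt_sq l, h0, zero_pow two_ne_zero])

theorem hasDerivAt_of_comp_sq {g F : ℂ → ℂ} {F' w : ℂ} (hw : w ≠ 0) (hF : HasDerivAt F F' w)
    (hgF : ∀ v, v ≠ 0 → g (v ^ 2) = F v) : HasDerivAt g (F' / (2 * w)) (w ^ 2) := by
  -- a branch of the square root near `w ^ 2`, with value `w` there
  set b : ℂ → ℂ := fun u => w * csqrt (u / w ^ 2)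
  have hw2 : w ^ 2 ≠ 0 := pow_ne_zero 2 hw
  have hb_sq : ∀ u, u ≠ 0 → b u ^ 2 = u := fun u hu => by
    simp only [b, mul_pow, csqrt_sq]
    field_simp
  have hb_center : b (w ^ 2) = w := by simp [b, csqrt, div_self hw2]
  have hb : HasDerivAt b (1 / (2 * w)) (w ^ 2) := by
    have hquot : HasDerivAt (fun u : ℂ => u / w ^ 2) (1 / w ^ 2) (w ^ 2) := by
      simpa using (hasDerivAt_id (w ^ 2)).div_const (w ^ 2)
    refine ((hquot.cpow_const (c := 1 / 2) (by simp [div_self hw2])).const_mul w).congr_deriv ?_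
    rw [div_self hw2, one_cpow]
    field_simp
  have hcomp : HasDerivAt (F ∘ b) (F' * (1 / (2 * w))) (w ^ 2) := by
    rw [← hb_center] at hF
    exact hF.comp _ hb
  rw [← mul_one_div]
  refine hcomp.congr_of_eventuallyEq ?_
  filter_upwards [isOpen_ne.mem_nhds hw2] with u hu
  have hbu : b u ≠ 0 := fun h0 => hu (by rw [← hb_sq u hu, h0, zero_pow two_ne_zero])
  rw [Function.comp_apply, ← hgF _ hbu, hb_sq u hu]

theorem phi_sq {w : ℂ} (h : ℂ) (x : ℝ) (hw : w ≠ 0) :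
    phi h (w ^ 2) x = cos (w * x) + h * sin (w * x) / w := by
  have hsq : (csqrt (w ^ 2) - w) * (csqrt (w ^ 2) + w) = 0 := by
    linear_combination csqrt_sq (w ^ 2)
  rw [phi, if_neg (pow_ne_zero 2 hw)]
  rcases mul_eq_zero.1 hsq with hpos | hneg
  · rw [sub_eq_zero.1 hpos]
  · rw [eq_neg_of_add_eq_zero_left hneg, neg_mul, cos_neg, sin_neg, mul_neg, neg_div_neg_eq]

theorem hasDerivAt_phi_pi_sq (h : ℂ) {w : ℂ} (hw : w ≠ 0) :
    HasDerivAt (fun u => phi h u π)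
      ((-π * sin (w * π) * w ^ 2 + h * (π * w * cos (w * π) - sin (w * π))) / (2 * w ^ 3))
      (w ^ 2) := by
  have hlin : HasDerivAt (fun v : ℂ => v * π) π w := by
    simpa using (hasDerivAt_id w).mul_const (π : ℂ)
  have hsinc : HasDerivAt (fun v => sin (v * π) / v)
      ((cos (w * π) * π * w - sin (w * π) * 1) / w ^ 2) w :=
    hlin.csin.div (hasDerivAt_id' w) hw
  have hF : HasDerivAt (fun v => cos (v * π) + h * sin (v * π) / v)
      (-sin (w * π) * π + h * ((cos (w * π) * π * w - sin (w * π) * 1) / w ^ 2)) w := by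
    simp only [mul_div_assoc]
    exact hlin.ccos.add (hsinc.const_mul h)
  refine (hasDerivAt_of_comp_sq hw hF fun v hv => phi_sq h π hv).congr_deriv ?_
  field_simp

theorem phi_sq_eq_zero_iff (h : ℂ) (x : ℝ) {w : ℂ} (hw : w ≠ 0) :
    phi h (w ^ 2) x = 0 ↔ w * cos (w * x) + h * sin (w * x) = 0 := by
  rw [phi_sq h x hw, add_div' _ _ _ hw, div_eq_zero_iff, or_iff_left hw, mul_comm]

theorem phi_zero (h : ℂ) (x : ℝ) : phi h 0 x = 1 + h * x := by
  simp [phi]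

theorem norm_phi_pi_sq_sub_taylor_le (h : ℂ) {w : ℂ} (hw : w ≠ 0) (hwπ : ‖w‖ * π ≤ 1) :
    ‖phi h (w ^ 2) π - phi h 0 π - w ^ 2 * (-π ^ 2 / 2 - h * π ^ 3 / 6)‖
      ≤ π ^ 4 * (1 + ‖h‖ * π) * ‖w‖ ^ 4 := by
  have hnorm : ‖w * π‖ = ‖w‖ * π := by
    rw [norm_mul, norm_real, Real.norm_of_nonneg Real.pi_pos.le]
  have hcos := cos_bound (hnorm.trans_le hwπ)
  have hsin := sin_bound (hnorm.trans_le hwπ)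
  rw [hnorm] at hcos hsin
  have hsplit : phi h (w ^ 2) π - phi h 0 π - w ^ 2 * (-π ^ 2 / 2 - h * π ^ 3 / 6)
      = (cos (w * π) - (1 - (w * π) ^ 2 / 2))
        + h / w * (sin (w * π) - (w * π - (w * π) ^ 3 / 6)) := by
    rw [phi_sq h π hw, phi_zero]
    field_simp
    ring
  have hw0 : 0 < ‖w‖ := norm_pos_iff.2 hw
  calc _ ≤ ‖w‖ ^ 4 * π ^ 4 * (5 / 96) + ‖h‖ / ‖w‖ * ((‖w‖ * π) ^ 5 / 100) := by
        rw [hsplit]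
        refine (norm_add_le _ _).trans (add_le_add (by linarith) ?_)
        rw [norm_mul, norm_div]
        gcongr
    _ = π ^ 4 * (5 / 96 + ‖h‖ * π / 100) * ‖w‖ ^ 4 := by
        field_simp
    _ ≤ π ^ 4 * (1 + ‖h‖ * π) * ‖w‖ ^ 4 := by
        gcongr
        · norm_num
        · linarith [mul_nonneg (norm_nonneg h) Real.pi_pos.le]

theorem phi_pi_sub_taylor_isBigO (h : ℂ) :
    (fun u => phi h u π - phi h 0 π - u * (-π ^ 2 / 2 - h * π ^ 3 / 6)) =O[𝓝 0]
      fun u => u ^ 2 := by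
  refine Asymptotics.IsBigO.of_bound (π ^ 4 * (1 + ‖h‖ * π)) ?_
  filter_upwards [Metric.ball_mem_nhds (0 : ℂ) (by positivity : (0 : ℝ) < 1 / π ^ 2)]
    with u hu
  rcases eq_or_ne u 0 with rfl | hu0
  · simp
  have hw := csqrt_ne_zero hu0
  have hwu : ‖csqrt u‖ ^ 2 = ‖u‖ := by rw [← norm_pow, csqrt_sq]
  have hwπ : ‖csqrt u‖ * π ≤ 1 := by
    rw [mem_ball_zero_iff, lt_div_iff₀ (by positivity)] at hu
    nlinarith [norm_nonneg (csqrt u), Real.pi_pos]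
  have hbound := norm_phi_pi_sq_sub_taylor_le h hw hwπ
  rw [csqrt_sq] at hbound
  rw [norm_pow, ← hwu]
  linarith

theorem hasDerivAt_phi_pi_zero (h : ℂ) :
    HasDerivAt (fun u => phi h u π) (-π ^ 2 / 2 - h * π ^ 3 / 6) 0 := by
  rw [hasDerivAt_iff_isLittleO_nhds_zero]
  simpa only [zero_add, smul_eq_mul] using
    (phi_pi_sub_taylor_isBigO h).trans_isLittleO (Asymptotics.isLittleO_pow_id (𝕜 := ℂ) one_lt_two)

-- `r = 2 π s`, so that `r / 2 = s π`
theorem mem_Zh_iff (h : ℂ) :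
    h ∈ Zh ↔ ∃ s ≠ 0, s * cos (s * π) + h * sin (s * π) = 0 ∧ sin (s * π) * cos (s * π) = π * s := by
  have hπ : (π : ℂ) ≠ 0 := ofReal_ne_zero.2 Real.pi_ne_zero
  constructor
  · rintro ⟨r, hr0, hsin, rfl⟩
    have hhalf : r / 2 = r / (2 * π) * π := by field_simp
    have hsin_half : sin (r / 2) ≠ 0 := fun h0 => hr0 (by
      rw [← hsin, ← mul_div_cancel₀ r two_ne_zero, sin_two_mul, h0, mul_zero, zero_mul])
    refine ⟨r / (2 * π), div_ne_zero hr0 (mul_ne_zero two_ne_zero hπ), ?_, ?_⟩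
    · rw [← hhalf]
      field_simp
      ring
    · rw [← hhalf]
      have h2 : sin (2 * (r / 2)) = r := by rw [mul_div_cancel₀ r two_ne_zero, hsin]
      rw [sin_two_mul] at h2
      field_simp
      linear_combination h2
  · rintro ⟨s, hs, hzero, hdouble⟩
    have hsin : sin (s * π) ≠ 0 := fun h0 => mul_ne_zero hπ hs (by rw [← hdouble, h0, zero_mul])
    refine ⟨2 * (s * π), mul_ne_zero two_ne_zero (mul_ne_zero hs hπ), ?_, ?_⟩
    · rw [sin_two_mul]
      linear_combination 2 * hdouble
    · rw [mul_div_cancel_left₀ _ two_ne_zero]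
      field_simp
      linear_combination hzero

theorem exists_double_zero_iff_mem_Zh (h : ℂ) :
    (∃ l, phi h l π = 0 ∧ deriv (fun u => phi h u π) l = 0) ↔ h ∈ Zh := by
  have hπ : (π : ℂ) ≠ 0 := ofReal_ne_zero.2 Real.pi_ne_zero
  rw [mem_Zh_iff]
  constructor
  · rintro ⟨l, hzero, hderiv⟩
    rcases eq_or_ne l 0 with rfl | hl
    · rw [phi_zero] at hzero
      rw [(hasDerivAt_phi_pi_zero h).deriv] at hderiv
      have hπ2 : (π : ℂ) ^ 2 = 0 := by linear_combination (-3) * hderiv - π ^ 2 / 2 * hzero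
      exact absurd hπ2 (pow_ne_zero 2 hπ)
    · have hw := csqrt_ne_zero hl
      rw [← csqrt_sq l, phi_sq_eq_zero_iff h π hw] at hzero
      rw [← csqrt_sq l, (hasDerivAt_phi_pi_sq h hw).deriv, div_eq_zero_iff,
        or_iff_left (by simp [hw])] at hderiv
      exact ⟨csqrt l, hw, hzero,
        (deriv_eq_zero_iff_of_sq_add_sq hπ hw (sin_sq_add_cos_sq _) hzero).1 hderiv⟩
  · rintro ⟨w, hw, hzero, hdouble⟩
    refine ⟨w ^ 2, (phi_sq_eq_zero_iff h π hw).2 hzero, ?_⟩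
    rw [(hasDerivAt_phi_pi_sq h hw).deriv,
      (deriv_eq_zero_iff_of_sq_add_sq hπ hw (sin_sq_add_cos_sq _) hzero).2 hdouble, zero_div]
end

/-- the entire function `λ ↦ φⱼ(π,λ)` has only simple zeros if and only if
`hⱼ ∉ Z_h`. (A zero `l` is simple iff the derivative does not vanish there.) -/
theorem statement3 (h : ℂ) :
    (∀ l : ℂ, phi h l Real.pi = 0 → deriv (fun u : ℂ => phi h u Real.pi) l ≠ 0) ↔ h ∉ Zh := by
  rw [← exists_double_zero_iff_mem_Zh]
  simp only [not_exists, not_and, ne_eq]
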